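/- Let G be a simple graph with vertices u, t. Iteratively define: S₀ = ∅; at step k, if u and t are connected in G minus S_k, pick any u-t path, let w_{k+1} be the neighbour of u on this path closest to t, and set S_{k+1} = S_k ∪ {w_{k+1}}; stop when u and t are disconnected. Then the final set S equals exactly the set of vertices w ∈ N(u) such that some chordless u-t path of G passes through the edge uw. -/

import Mathlib

open SimpleGraph

variable {V : Type*}

/-- `l` is a (simple) path in `G`, given as its list of vertices. -/
def IsPathL (G : SimpleGraph V) (l : List V) : Prop :=
  l.Chain' G.Adj ∧ l.Nodup

/-- `l` is an `s`-`t` path in `G`. -/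
def IsStPathL (G : SimpleGraph V) (s t : V) (l : List V) : Prop :=
  IsPathL G l ∧ l.head? = some s ∧ l.getLast? = some t

/-- No two non-consecutive vertices of `l` are adjacent in `G`. -/
def NoChord (G : SimpleGraph V) (l : List V) : Prop :=
  ∀ (i j : ℕ) (hi : i < l.length) (hj : j < l.length), i + 1 < j →
    ¬ G.Adj (l.get ⟨i, hi⟩) (l.get ⟨j, hj⟩)

/-- `l` is a chordless (induced) `s`-`t` path in `G`. -/
def IsChordlessStPathL (G : SimpleGraph V) (s t : V) (l : List V) : Prop :=
  IsStPathL G s t l ∧ NoChord G l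

/-- `x` is a good neighbour of `vᵢ` (the `i`-th vertex of `l`): some chordless `s`-`t`
path of `G` has `v₀ v₁ … vᵢ x` as a prefix. -/
def GoodNbr (G : SimpleGraph V) (s t : V) (l : List V) (i : ℕ) (x : V) : Prop :=
  ∃ l' : List V, IsChordlessStPathL G s t l' ∧ (l.take (i + 1) ++ [x]) <+: l'

/-- `l` is a cycle in `G`: at least 3 distinct vertices, each cyclically consecutive pair
adjacent. -/
def IsCycleL (G : SimpleGraph V) (l : List V) : Prop :=
  3 ≤ l.length ∧ l.Nodup ∧
    ∀ (i : ℕ) (hi : i < l.length),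
      G.Adj (l.get ⟨i, hi⟩) (l.get ⟨(i + 1) % l.length, Nat.mod_lt _ (by omega)⟩)

/-- `l` is a chordless (induced) cycle in `G`: a cycle such that any two adjacent vertices on
it are cyclically consecutive. -/
def IsChordlessCycleL (G : SimpleGraph V) (l : List V) : Prop :=
  IsCycleL G l ∧
    ∀ (i j : ℕ) (hi : i < l.length) (hj : j < l.length),
      G.Adj (l.get ⟨i, hi⟩) (l.get ⟨j, hj⟩) →
        (i + 1) % l.length = j ∨ (j + 1) % l.length = i

/-- The subgraph of `G` induced by the complement of `R` (vertices of `R` deleted), kept on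
the same vertex type. -/
def delSet (G : SimpleGraph V) (R : Set V) : SimpleGraph V where
  Adj a b := G.Adj a b ∧ a ∉ R ∧ b ∉ R
  symm := ⟨fun _ _ ⟨h, ha, hb⟩ => ⟨h.symm, hb, ha⟩⟩
  loopless := ⟨fun _ ⟨h, _, _⟩ => G.ne_of_adj h rfl⟩

/-- One step of the cleanup procedure for `u` and `t`: if `u` and `t` are still connected in
`G` minus `S`, pick any `u`-`t` path `q` there, let `w` be the neighbour of `u` on `q`
closest to `t`, and add `w` to `S`. -/
def CleanStep (G : SimpleGraph V) (u t : V) (S S' : Set V) : Prop :=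
  ∃ (q : List V) (k : ℕ) (hk : k < q.length),
    IsStPathL (delSet G S) u t q ∧
    (delSet G S).Adj u (q.get ⟨k, hk⟩) ∧
    (∀ (j : ℕ) (hj : j < q.length), k < j → ¬ (delSet G S).Adj u (q.get ⟨j, hj⟩)) ∧
    S' = S ∪ {q.get ⟨k, hk⟩}

/-!
A vertex `w` added by a cleanup step is the second vertex of a chordless `u`-`t` path: shortcut
the path formed by `u` and the chosen path from `w` on to a chordless path inside it; as `w` is
the last neighbour of `u` on the chosen path, the shortcut still starts with the edge `uw`.
Conversely, every vertex of `S` is a neighbour of `u`, so a chordless path `u w …` with `w ∉ S`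
avoids `S` altogether (its later vertices are not adjacent to `u`); it would survive in `G`
minus `S`.
-/

open scoped List

def chordlessSuccessors (G : SimpleGraph V) (u t : V) : Set V :=
  {w | G.Adj u w ∧ ∃ l : List V, IsChordlessStPathL G u t l ∧
    ∃ h : 1 < l.length, l.get ⟨1, h⟩ = w}

namespace IsStPathL

variable {G : SimpleGraph V} {s t : V} {l : List V}

theorem mono {H : SimpleGraph V} (hl : IsStPathL G s t l) (hGH : G ≤ H) : IsStPathL H s t l :=
  ⟨⟨hl.1.1.imp fun _ _ h => hGH h, hl.1.2⟩, hl.2⟩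

theorem ne_of_one_lt_length (hl : IsStPathL G s t l) (h : 1 < l.length) : s ≠ t := by
  obtain ⟨⟨-, hnodup⟩, hhead, hlast⟩ := hl
  rintro rfl
  rw [List.head?_eq_getElem?, List.getElem?_eq_getElem (by omega)] at hhead
  rw [List.getLast?_eq_getElem?, List.getElem?_eq_getElem (by omega)] at hlast
  have := hnodup.getElem_inj_iff.mp (Option.some_injective _ (hhead.trans hlast.symm))
  omega

theorem cons_drop {rest : List V} (hl : IsStPathL G s t (s :: rest)) {k : ℕ}
    (hk : k < rest.length) (hadj : G.Adj s rest[k]) : IsStPathL G s t (s :: rest.drop k) := by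
  obtain ⟨⟨hchain, hnodup⟩, -, hlast⟩ := hl
  refine ⟨⟨?_, ?_⟩, rfl, ?_⟩
  · have hchain' : (rest.drop k).IsChain G.Adj :=
      hchain.infix (List.drop_suffix (k + 1) (s :: rest)).isInfix
    rw [List.drop_eq_getElem_cons hk] at hchain' ⊢
    exact hchain'.cons_cons hadj
  · obtain ⟨hs, hrest⟩ := List.nodup_cons.mp hnodup
    exact List.nodup_cons.mpr ⟨fun h => hs (List.drop_subset _ _ h),
      hrest.sublist (List.drop_sublist _ _)⟩
  · simpa [List.getLast?_cons, List.getLast?_drop, not_le.mpr hk] using hlast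

theorem shortcut (hl : IsStPathL G s t l) {i j : ℕ} (hij : i < j) (hj : j < l.length)
    (hadj : G.Adj l[i] l[j]) :
    IsStPathL G s t (l.take (i + 1) ++ l.drop j) ∧ l.take (i + 1) ++ l.drop j <+ l := by
  obtain ⟨⟨hchain, hnodup⟩, hhead, hlast⟩ := hl
  have hsub : l.take (i + 1) ++ l.drop j <+ l := by
    conv_rhs => rw [← List.take_append_drop (i + 1) l]
    exact (List.drop_sublist_drop_left l hij).append_left _
  refine ⟨⟨⟨?_, hnodup.sublist hsub⟩, ?_, ?_⟩, hsub⟩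
  · refine List.isChain_append.mpr ⟨hchain.infix (List.take_prefix _ _).isInfix,
      hchain.infix (List.drop_suffix _ _).isInfix, ?_⟩
    simp [List.getLast?_take, List.head?_drop, List.getElem?_eq_getElem (hij.trans hj),
      List.getElem?_eq_getElem hj, hadj]
  · simp [List.head?_append, List.head?_take, hhead]
  · simp [List.getLast?_append, List.getLast?_drop, hlast]
    omega

theorem exists_chordless_sublist (hl : IsStPathL G s t l) :
    ∃ l', IsChordlessStPathL G s t l' ∧ l' <+ l := by
  induction hn : l.length using Nat.strong_induction_on generalizing l with
  | _ n ih =>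
  by_cases hc : NoChord G l
  · exact ⟨l, ⟨hl, hc⟩, List.Sublist.refl l⟩
  obtain ⟨i, j, hi, hj, hij, hadj⟩ : ∃ i j, ∃ (hi : i < l.length) (hj : j < l.length),
      i + 1 < j ∧ G.Adj l[i] l[j] := by
    simpa [NoChord] using hc
  obtain ⟨hl', hsub⟩ := hl.shortcut (by omega) hj hadj
  obtain ⟨l', hl'', hsub'⟩ := ih _ (by simp; omega) hl' rfl
  exact ⟨l', hl'', hsub'.trans hsub⟩

end IsStPathL

section delSet

variable {G : SimpleGraph V} {S : Set V} {l : List V}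

theorem notMem_of_isChain_delSet (hl : l.IsChain (delSet G S).Adj) (hlen : 2 ≤ l.length)
    {v : V} (hv : v ∈ l) : v ∉ S := by
  obtain ⟨m, hm, rfl⟩ := List.mem_iff_getElem.mp hv
  rw [List.isChain_iff_getElem] at hl
  obtain hm' | hm' := Nat.lt_or_ge (m + 1) l.length
  · exact (hl m hm').2.1
  · obtain ⟨m, rfl⟩ : ∃ m', m = m' + 1 := ⟨m - 1, by omega⟩
    exact (hl m hm).2.2

theorem IsChordlessStPathL.isStPathL_delSet {u t : V} (hl : IsChordlessStPathL G u t l)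
    (hS : ∀ v ∈ S, G.Adj u v) (h1 : 1 < l.length) (h1S : l[1] ∉ S) :
    IsStPathL (delSet G S) u t l := by
  obtain ⟨⟨⟨hchain, hnodup⟩, hhead, hlast⟩, hnochord⟩ := hl
  obtain ⟨tl, rfl⟩ := List.head?_eq_some_iff.mp hhead
  have hnotMem : ∀ v ∈ u :: tl, v ∉ S := by
    intro v hv hvS
    obtain ⟨m, hm, rfl⟩ := List.mem_iff_getElem.mp hv
    match m with
    | 0 => exact G.loopless.irrefl u (hS u hvS)
    | 1 => exact h1S hvS
    | m + 2 => exact hnochord 0 (m + 2) (by simp) hm (by omega) (hS _ hvS)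
  exact ⟨⟨hchain.imp_of_mem_imp fun a b ha hb hab => ⟨hab, hnotMem a ha, hnotMem b hb⟩,
    hnodup⟩, hhead, hlast⟩

end delSet

theorem CleanStep.exists_eq_union_singleton {G : SimpleGraph V} {u t : V} {S S' : Set V}
    (h : CleanStep G u t S S') : ∃ w ∈ chordlessSuccessors G u t, S' = S ∪ {w} := by
  obtain ⟨q, k, hk, hq, hadj, hlastNbr, rfl⟩ := h
  refine ⟨_, ⟨hadj.1, ?_⟩, rfl⟩
  obtain ⟨rest, rfl⟩ := List.head?_eq_some_iff.mp hq.2.1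
  obtain ⟨k, rfl⟩ : ∃ k', k = k' + 1 := by
    cases k with
    | zero => exact absurd hadj.1 (G.loopless.irrefl u)
    | succ k => exact ⟨k, rfl⟩
  have hk' : k < rest.length := by simpa using hk
  have hut : u ≠ t := hq.ne_of_one_lt_length (by simp; omega)
  have hnotS : ∀ v ∈ u :: rest, v ∉ S :=
    fun v hv => notMem_of_isChain_delSet hq.1.1 (by simp; omega) hv
  obtain ⟨l, hl, hsub⟩ :=
    ((hq.mono fun _ _ h => h.1).cons_drop hk' hadj.1).exists_chordless_sublist
  obtain ⟨tl, rfl⟩ := List.head?_eq_some_iff.mp hl.1.2.1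
  obtain ⟨x, tl, rfl⟩ : ∃ x tl', tl = x :: tl' :=
    List.exists_cons_of_ne_nil fun htl => hut (by simpa [htl] using hl.1.2.2)
  have hux : G.Adj u x := (List.isChain_cons_cons.mp hl.1.1.1).1
  have hx : x ∈ rest.drop k := (List.cons_sublist_cons.mp hsub).subset List.mem_cons_self
  refine ⟨u :: x :: tl, hl, by simp, ?_⟩
  rw [List.drop_eq_getElem_cons hk'] at hx
  obtain rfl | hx := List.mem_cons.mp hx
  · rfl
  -- `x` comes after `w` on `q`, so it cannot be a neighbour of `u` in `G` minus `S`
  obtain ⟨m, hm, rfl⟩ := List.mem_iff_getElem.mp hx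
  rw [List.getElem_drop] at hux ⊢
  have hm' : k + 1 + m < rest.length := by simp at hm; omega
  have hxS : rest[k + 1 + m] ∉ S := hnotS _ (List.mem_cons_of_mem _ (List.getElem_mem hm'))
  exact (hlastNbr (k + 1 + m + 1) (by simpa using hm') (by omega)
    ⟨hux, hnotS u List.mem_cons_self, hxS⟩).elim

theorem subset_chordlessSuccessors_of_reflTransGen {G : SimpleGraph V} {u t : V} {S : Set V}
    (hrun : Relation.ReflTransGen (CleanStep G u t) ∅ S) : S ⊆ chordlessSuccessors G u t := by
  induction hrun with
  | refl => exact Set.empty_subset _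
  | tail _ hstep ih =>
    obtain ⟨w, hw, rfl⟩ := hstep.exists_eq_union_singleton
    exact Set.union_subset ih (Set.singleton_subset_iff.mpr hw)

/-- Correctness of the cleanup operation: if starting from `∅` the cleanup steps produce a
set `S` such that `u` and `t` are disconnected in `G` minus `S`, then `S` is exactly the set
of neighbours `w` of `u` such that some chordless `u`-`t` path of `G` passes through the
edge `uw`. -/
theorem stmt12 (G : SimpleGraph V) (u t : V) (S : Set V)
    (hrun : Relation.ReflTransGen (CleanStep G u t) ∅ S)
    (hstop : ¬ ∃ q : List V, IsStPathL (delSet G S) u t q) :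
    S = {w | G.Adj u w ∧ ∃ l : List V, IsChordlessStPathL G u t l ∧
          ∃ h : 1 < l.length, l.get ⟨1, h⟩ = w} := by
  have hsub := subset_chordlessSuccessors_of_reflTransGen hrun
  refine hsub.antisymm fun w ⟨_, l, hl, h1, hw⟩ => by_contra fun hwS => hstop ?_
  exact ⟨l, hl.isStPathL_delSet (fun v hv => (hsub hv).1) h1 (by simpa [← hw] using hwS)⟩
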